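/- arXiv:2504.14513 — 2 statements merged into one kernel-verified Lean document; each statement's English description precedes it below -/
import Mathlib

section
/- For every odd prime p and every fixed integer t, there are exactly p-1 residue classes n modulo p·(p-1) in {0, 1, ..., p(p-1)-1} such that p divides n·2^n + 1 - t. -/
/-!
Modulo `p`, Fermat's little theorem turns `n * a ^ n ≡ c` into
`n ≡ c * a ^ (-(n mod (p - 1)))`, a congruence for `n mod p` determined by `n mod (p - 1)`.
Since `p` and `p - 1` are coprime, the Chinese remainder theorem gives exactly one solution
`n < p * (p - 1)` for each of the `p - 1` residues of `n` modulo `p - 1`.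
-/

open Finset

theorem Nat.card_filter_range_mul_modEq_of_coprime {m k : ℕ} (hm : m ≠ 0) (hmk : m.Coprime k)
    (f : ℕ → ℕ) :
    ((range (m * k)).filter (fun n => n ≡ f (n % k) [MOD m])).card = k := by
  refine (card_bij (fun n _ => n % k) (fun n hn => mem_range.2 (Nat.mod_lt _ ?_)) ?_ ?_).trans
    (card_range k)
  · exact Nat.pos_of_mul_pos_left ((Nat.zero_le n).trans_lt (mem_range.1 (mem_filter.1 hn).1))
  · intro n₁ h₁ n₂ h₂ hmodk
    simp only [mem_filter, mem_range] at h₁ h₂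
    have hmodm : n₁ ≡ n₂ [MOD m] := h₁.2.trans (hmodk ▸ h₂.2.symm)
    exact Nat.ModEq.eq_of_lt_of_lt
      ((Nat.modEq_and_modEq_iff_modEq_mul hmk).1 ⟨hmodm, hmodk⟩) h₁.1 h₂.1
  · intro b hb
    have hk : k ≠ 0 := by rintro rfl; simp at hb
    set n := Nat.chineseRemainder hmk (f b) b
    have hnb : n % k = b := Eq.trans n.prop.2 (Nat.mod_eq_of_lt (mem_range.1 hb))
    refine ⟨n, mem_filter.2 ⟨mem_range.2 (Nat.chineseRemainder_lt_mul hmk _ _ hm hk), ?_⟩, hnb⟩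
    rw [hnb]
    exact n.prop.1

namespace ZMod

variable {p : ℕ} [Fact p.Prime]

theorem pow_eq_pow_mod_card_sub_one {a : ZMod p} (ha : a ≠ 0) (n : ℕ) :
    a ^ n = a ^ (n % (p - 1)) :=
  pow_eq_pow_mod n (pow_card_sub_one_eq_one ha)

theorem intCast_dvd_mul_pow_sub_iff_modEq {a : ℤ} (ha : (a : ZMod p) ≠ 0) (c : ℤ) (n : ℕ) :
    (p : ℤ) ∣ n * a ^ n - c ↔ n ≡ ((c : ZMod p) / (a : ZMod p) ^ (n % (p - 1))).val [MOD p] := by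
  rw [← intCast_zmod_eq_zero_iff_dvd, ← natCast_eq_natCast_iff, natCast_zmod_val,
    eq_div_iff (pow_ne_zero _ ha), ← pow_eq_pow_mod_card_sub_one ha]
  push_cast
  exact sub_eq_zero

theorem card_filter_range_dvd_mul_pow_sub {a : ℤ} (ha : (a : ZMod p) ≠ 0) (c : ℤ) :
    ((range (p * (p - 1))).filter (fun n : ℕ => (p : ℤ) ∣ n * a ^ n - c)).card = p - 1 := by
  have hp := (Fact.out : p.Prime)
  have hcop : p.Coprime (p - 1) := by
    simpa [Nat.Coprime] using Nat.gcd_self_sub_right hp.one_lt.le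
  simp_rw [intCast_dvd_mul_pow_sub_iff_modEq ha]
  exact Nat.card_filter_range_mul_modEq_of_coprime hp.ne_zero hcop
    (fun r => ((c : ZMod p) / (a : ZMod p) ^ r).val)

end ZMod

theorem count_residues_dividing_cullen_shift (p : ℕ) (hp : p.Prime) (hodd : Odd p)
    (t : ℤ) :
    ((Finset.range (p * (p - 1))).filter
      (fun n : ℕ => (p : ℤ) ∣ (n : ℤ) * (2 : ℤ) ^ n + 1 - t)).card = p - 1 := by
  have : Fact p.Prime := ⟨hp⟩
  have h2 : ((2 : ℤ) : ZMod p) ≠ 0 := by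
    rw [Int.cast_ofNat, ← Nat.cast_ofNat, Ne, ZMod.natCast_eq_zero_iff,
      Nat.prime_dvd_prime_iff_eq hp Nat.prime_two]
    rintro rfl
    exact Nat.not_even_iff_odd.2 hodd even_two
  simp_rw [← sub_sub_eq_add_sub]
  exact ZMod.card_filter_range_dvd_mul_pow_sub h2 (t - 1)
end

section
/- Let p be an odd prime, t an integer, and suppose n₀ satisfies n₀·2^{n₀} + 1 - t ≡ 0 (mod p^j) for some j ≥ 1. Then among the p numbers n = n₀ + (p-1)·p^j·ℓ with ℓ ∈ {0, 1, ..., p-1}, exactly one satisfies n·2^n + 1 - t ≡ 0 (mod p^{j+1}), namely the one with ℓ ≡ 2^{-n₀}·(n₀·2^{n₀} + 1 - t)/p^j (mod p). -/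
/-!
Write `n₀ * 2 ^ n₀ + 1 - t = p ^ j * c` and `n = n₀ + (p - 1) * p ^ j * ℓ`. Euler's theorem modulo
`p ^ (j + 1)` replaces `2 ^ n` by `2 ^ n₀`, so that `n * 2 ^ n + 1 - t` is congruent to
`p ^ j * (c + (p - 1) * ℓ * 2 ^ n₀)`. Hence `p ^ (j + 1)` divides it exactly when
`2 ^ n₀ * ℓ ≡ c` modulo `p`, and as `2` is invertible modulo the odd prime `p` this linear
congruence has exactly one solution `ℓ < p`.
-/

theorem Int.pow_mul_prime_pow_modEq_one {p : ℕ} (hp : p.Prime) {a : ℤ} (ha : IsCoprime a p)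
    (j : ℕ) : a ^ ((p - 1) * p ^ j) ≡ 1 [ZMOD p ^ (j + 1)] := by
  have h := dvd_sub_pow_of_dvd_sub (Int.prime_dvd_pow_sub_one hp ha) j
  rw [one_pow, ← pow_mul] at h
  exact (Int.modEq_iff_dvd.mpr h).symm

theorem Int.existsUnique_lt_mul_modEq {n : ℕ} [NeZero n] {u : ℤ} (hu : IsCoprime u n) (c : ℤ) :
    ∃! ℓ : ℕ, ℓ < n ∧ u * ℓ ≡ c [ZMOD n] := by
  have hinv := ZMod.coe_int_inv_mul_eq_one hu
  simp only [← ZMod.intCast_eq_intCast_iff, Int.cast_mul, Int.cast_natCast]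
  refine ⟨((u : ZMod n)⁻¹ * c).val, ⟨ZMod.val_lt _, ?_⟩, ?_⟩
  · rw [ZMod.natCast_zmod_val, ← mul_assoc, ZMod.coe_int_mul_inv_eq_one hu, one_mul]
  · rintro ℓ ⟨hℓ, hℓc⟩
    rw [← hℓc, ← mul_assoc, hinv, one_mul, ZMod.val_natCast_of_lt hℓ]

theorem Int.prime_pow_succ_dvd_lift_iff {p : ℕ} (hp : p.Prime) {a : ℤ} (ha : IsCoprime a p)
    {n₀ j : ℕ} {s c : ℤ} (hc : n₀ * a ^ n₀ + s = p ^ j * c) (ℓ : ℕ) :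
    (p : ℤ) ^ (j + 1) ∣ ((n₀ + (p - 1) * p ^ j * ℓ : ℕ) : ℤ) * a ^ (n₀ + (p - 1) * p ^ j * ℓ) + s
      ↔ a ^ n₀ * ℓ ≡ c [ZMOD p] := by
  have hpow : a ^ (n₀ + (p - 1) * p ^ j * ℓ) ≡ a ^ n₀ [ZMOD p ^ (j + 1)] :=
    calc a ^ (n₀ + (p - 1) * p ^ j * ℓ) = a ^ n₀ * (a ^ ((p - 1) * p ^ j)) ^ ℓ := by
          rw [pow_add, pow_mul]
      _ ≡ a ^ n₀ * 1 ^ ℓ [ZMOD p ^ (j + 1)] :=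
          ((Int.pow_mul_prime_pow_modEq_one hp ha j).pow ℓ).mul_left _
      _ = a ^ n₀ := by ring
  have hvalue : ((n₀ + (p - 1) * p ^ j * ℓ : ℕ) : ℤ) * a ^ (n₀ + (p - 1) * p ^ j * ℓ) + s
      ≡ p ^ j * (c + (p - 1) * ℓ * a ^ n₀) [ZMOD p ^ (j + 1)] :=
    calc _ ≡ ((n₀ + (p - 1) * p ^ j * ℓ : ℕ) : ℤ) * a ^ n₀ + s [ZMOD p ^ (j + 1)] :=
          (hpow.mul_left _).add_right s
      _ = p ^ j * (c + (p - 1) * ℓ * a ^ n₀) := by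
          push_cast [Nat.cast_sub hp.one_le]
          linear_combination hc
  have hpj : (p : ℤ) ^ j ≠ 0 := pow_ne_zero _ (by exact_mod_cast hp.ne_zero)
  rw [hvalue.dvd_iff, pow_succ, mul_dvd_mul_iff_left hpj, Int.modEq_iff_dvd,
    show c + (p - 1) * ℓ * a ^ n₀ = p * (ℓ * a ^ n₀) + (c - a ^ n₀ * ℓ) by ring,
    dvd_add_right (dvd_mul_right _ _)]

theorem hensel_type_lifting_general (p : ℕ) (hp : p.Prime) (hodd : Odd p) (t : ℤ)
    (n₀ j : ℕ)
    (h : (p : ℤ) ^ j ∣ (n₀ : ℤ) * 2 ^ n₀ + 1 - t) :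
    (∃! ℓ : ℕ, ℓ < p ∧
      (p : ℤ) ^ (j + 1) ∣
        ((n₀ + (p - 1) * p ^ j * ℓ : ℕ) : ℤ) * 2 ^ (n₀ + (p - 1) * p ^ j * ℓ)
          + 1 - t) ∧
    (∀ ℓ : ℕ, ℓ < p →
      (p : ℤ) ^ (j + 1) ∣
        ((n₀ + (p - 1) * p ^ j * ℓ : ℕ) : ℤ) * 2 ^ (n₀ + (p - 1) * p ^ j * ℓ)
          + 1 - t →
      (2 : ℤ) ^ n₀ * ℓ ≡ ((n₀ : ℤ) * 2 ^ n₀ + 1 - t) / (p : ℤ) ^ j [ZMOD p]) := by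
  have : NeZero p := ⟨hp.ne_zero⟩
  have h2 : IsCoprime (2 : ℤ) p := by
    exact_mod_cast Nat.isCoprime_iff_coprime.mpr (Nat.coprime_two_left.mpr hodd)
  obtain ⟨c, hc⟩ := h
  have hquot : ((n₀ : ℤ) * 2 ^ n₀ + 1 - t) / (p : ℤ) ^ j = c := by
    rw [hc, Int.mul_ediv_cancel_left _ (pow_ne_zero _ (by exact_mod_cast hp.ne_zero))]
  have hlift := Int.prime_pow_succ_dvd_lift_iff hp h2 (s := 1 - t) (by rw [← hc]; ring)
  rw [hquot]
  simp only [add_sub_assoc, hlift]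
  exact ⟨Int.existsUnique_lt_mul_modEq h2.pow_left c, fun _ _ ↦ id⟩

theorem hensel_type_lifting (p : ℕ) (hp : p.Prime) (hodd : Odd p) (t : ℤ)
    (n₀ j : ℕ) (hj : 1 ≤ j)
    (h : (p : ℤ) ^ j ∣ (n₀ : ℤ) * 2 ^ n₀ + 1 - t) :
    (∃! ℓ : ℕ, ℓ < p ∧
      (p : ℤ) ^ (j + 1) ∣
        ((n₀ + (p - 1) * p ^ j * ℓ : ℕ) : ℤ) * 2 ^ (n₀ + (p - 1) * p ^ j * ℓ)
          + 1 - t) ∧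
    (∀ ℓ : ℕ, ℓ < p →
      (p : ℤ) ^ (j + 1) ∣
        ((n₀ + (p - 1) * p ^ j * ℓ : ℕ) : ℤ) * 2 ^ (n₀ + (p - 1) * p ^ j * ℓ)
          + 1 - t →
      (2 : ℤ) ^ n₀ * ℓ ≡ ((n₀ : ℤ) * 2 ^ n₀ + 1 - t) / (p : ℤ) ^ j [ZMOD p]) :=
  hensel_type_lifting_general p hp hodd t n₀ j h
end
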